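/- Contact property of the 2D HLLC flux (Lemma 4.1): if ρ_L > 0, ρ_R > 0, p > 0, n ∈ ℝ² is a unit vector, and U_L = (ρ_L, 0, p/(γ−1)), U_R = (ρ_R, 0, p/(γ−1)) (zero momentum vector), then F^hllc(U_L, U_R; n) = (0, p n, 0). -/

import Mathlib

open scoped RealInnerProductSpace

noncomputable section

/-- A 2D state `U = (ρ, m, E)` with momentum vector `m ∈ ℝ²`. -/
abbrev St2 : Type := ℝ × EuclideanSpace ℝ (Fin 2) × ℝ

/-- The admissible set `G = {(ρ, m, E) : ρ > 0, E − ‖m‖²/(2ρ) > 0}`. -/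
def admG2 : Set St2 := {U | 0 < U.1 ∧ 0 < U.2.2 - ‖U.2.1‖ ^ 2 / (2 * U.1)}

/-- The pressure `p = (γ−1)(E − ‖m‖²/(2ρ))`. -/
def press2 (γ : ℝ) (U : St2) : ℝ := (γ - 1) * (U.2.2 - ‖U.2.1‖ ^ 2 / (2 * U.1))

/-- The sound speed `√(γ p / ρ)`. -/
def sound2 (γ : ℝ) (U : St2) : ℝ := Real.sqrt (γ * press2 γ U / U.1)

/-- The normal velocity `q(U) = u·n = (m·n)/ρ`. -/
def qvel (U : St2) (n : EuclideanSpace ℝ (Fin 2)) : ℝ := ⟪U.2.1, n⟫ / U.1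

/-- The directional Euler flux `F(U)·n = (ρq, q m + p n, (E+p)q)`. -/
def eulerFn (γ : ℝ) (U : St2) (n : EuclideanSpace ℝ (Fin 2)) : St2 :=
  (U.1 * qvel U n, qvel U n • U.2.1 + press2 γ U • n,
    (U.2.2 + press2 γ U) * qvel U n)

/-- `α_n(U) = |u·n| + √(γp/ρ)`. -/
def alphaN (γ : ℝ) (U : St2) (n : EuclideanSpace ℝ (Fin 2)) : ℝ :=
  |qvel U n| + sound2 γ U

/-- Left wave speed of the 2D HLLC flux. -/
def SL2 (γ : ℝ) (UL UR : St2) (n : EuclideanSpace ℝ (Fin 2)) : ℝ :=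
  min (qvel UL n - sound2 γ UL) (qvel UR n - sound2 γ UR)

/-- Right wave speed of the 2D HLLC flux. -/
def SR2 (γ : ℝ) (UL UR : St2) (n : EuclideanSpace ℝ (Fin 2)) : ℝ :=
  max (qvel UL n + sound2 γ UL) (qvel UR n + sound2 γ UR)

/-- Middle wave speed of the 2D HLLC flux. -/
def Sstar2 (γ : ℝ) (UL UR : St2) (n : EuclideanSpace ℝ (Fin 2)) : ℝ :=
  (press2 γ UR - press2 γ UL + UL.1 * qvel UL n * (SL2 γ UL UR n - qvel UL n)
      - UR.1 * qvel UR n * (SR2 γ UL UR n - qvel UR n)) /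
    (UL.1 * (SL2 γ UL UR n - qvel UL n) - UR.1 * (SR2 γ UL UR n - qvel UR n))

/-- 2D HLLC intermediate state. -/
def Ustar2 (γ : ℝ) (Si Sst : ℝ) (Ui : St2) (n : EuclideanSpace ℝ (Fin 2)) : St2 :=
  ((Si - qvel Ui n) / (Si - Sst)) •
    ((Ui.1, Ui.2.1 + (Ui.1 * (Sst - qvel Ui n)) • n,
      Ui.2.2 + Ui.1 * (Sst - qvel Ui n) *
        (Sst + press2 γ Ui / (Ui.1 * (Si - qvel Ui n)))) : St2)

/-- 2D intermediate flux `F_{*i} = F(U_i)·n + S_i (U_{*i} − U_i)`. -/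
def Fstar2 (γ : ℝ) (Si Sst : ℝ) (Ui : St2) (n : EuclideanSpace ℝ (Fin 2)) : St2 :=
  eulerFn γ Ui n + Si • (Ustar2 γ Si Sst Ui n - Ui)

/-- The 2D HLLC numerical flux in direction `n`. -/
def Fhllc2 (γ : ℝ) (UL UR : St2) (n : EuclideanSpace ℝ (Fin 2)) : St2 :=
  if 0 ≤ SL2 γ UL UR n then eulerFn γ UL n
  else if 0 ≤ Sstar2 γ UL UR n then Fstar2 γ (SL2 γ UL UR n) (Sstar2 γ UL UR n) UL n
  else if 0 ≤ SR2 γ UL UR n then Fstar2 γ (SR2 γ UL UR n) (Sstar2 γ UL UR n) UR n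
  else eulerFn γ UR n

end

/-
A state at rest has zero normal velocity, so both the middle wave speed `S_*` (whose numerator
reduces to `p_R − p_L`) and the flux `F(U)·n = (0, p n, 0)` see only the pressure. Since the sound
speed is positive, `S_L < 0 = S_*`, so the HLLC flux is `F_{*L}`; and when `S_* = q_L` the
intermediate state `U_{*L}` is `U_L` itself, so `F_{*L} = F(U_L)·n = (0, p n, 0)`.
-/

section HLLC

variable {γ : ℝ} {UL UR Ui : St2} {n : EuclideanSpace ℝ (Fin 2)}

lemma qvel_of_momentum_eq_zero (ρ E : ℝ) (n : EuclideanSpace ℝ (Fin 2)) :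
    qvel (ρ, 0, E) n = 0 := by
  simp [qvel]

lemma press2_of_momentum_eq_zero (hγ : γ ≠ 1) (ρ p : ℝ) :
    press2 γ (ρ, 0, p / (γ - 1)) = p := by
  have : γ - 1 ≠ 0 := sub_ne_zero.mpr hγ
  simp only [press2, norm_zero]
  field_simp
  ring

lemma sound2_pos (hγ : 0 < γ) (hρ : 0 < Ui.1) (hp : 0 < press2 γ Ui) : 0 < sound2 γ Ui :=
  Real.sqrt_pos.mpr (by positivity)

lemma SL2_le_left : SL2 γ UL UR n ≤ qvel UL n - sound2 γ UL :=
  min_le_left _ _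

lemma eulerFn_of_qvel_eq_zero (hq : qvel Ui n = 0) :
    eulerFn γ Ui n = (0, press2 γ Ui • n, 0) := by
  simp [eulerFn, hq]

lemma Sstar2_eq_zero (hqL : qvel UL n = 0) (hqR : qvel UR n = 0)
    (hp : press2 γ UL = press2 γ UR) : Sstar2 γ UL UR n = 0 := by
  simp [Sstar2, hqL, hqR, hp]

lemma Ustar2_eq_self {Si Sst : ℝ} (hSst : Sst = qvel Ui n) (hSi : Si ≠ Sst) :
    Ustar2 γ Si Sst Ui n = Ui := by
  subst hSst
  simp [Ustar2, div_self (sub_ne_zero.mpr hSi)]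

lemma Fstar2_eq_eulerFn {Si Sst : ℝ} (hSst : Sst = qvel Ui n) (hSi : Si ≠ Sst) :
    Fstar2 γ Si Sst Ui n = eulerFn γ Ui n := by
  simp [Fstar2, Ustar2_eq_self hSst hSi]

theorem Fhllc2_of_qvel_eq_zero (hqL : qvel UL n = 0) (hqR : qvel UR n = 0)
    (hp : press2 γ UL = press2 γ UR) (hc : 0 < sound2 γ UL) :
    Fhllc2 γ UL UR n = (0, press2 γ UL • n, 0) := by
  have hSstar : Sstar2 γ UL UR n = 0 := Sstar2_eq_zero hqL hqR hp
  have hSL : SL2 γ UL UR n < 0 := by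
    linarith [SL2_le_left (γ := γ) (UL := UL) (UR := UR) (n := n)]
  rw [Fhllc2, if_neg hSL.not_ge, if_pos hSstar.ge,
    Fstar2_eq_eulerFn (hSstar.trans hqL.symm) (hSL.trans_eq hSstar.symm).ne,
    eulerFn_of_qvel_eq_zero hqL]

end HLLC

theorem hllc2_contact_general (γ : ℝ) (hγ : 1 < γ) (ρL ρR p : ℝ)
    (hρL : 0 < ρL) (hp : 0 < p)
    (n : EuclideanSpace ℝ (Fin 2)) :
    Fhllc2 γ (ρL, 0, p / (γ - 1)) (ρR, 0, p / (γ - 1)) n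
      = ((0 : ℝ), p • n, (0 : ℝ)) := by
  have hpL := press2_of_momentum_eq_zero hγ.ne' ρL p
  have hpR := press2_of_momentum_eq_zero hγ.ne' ρR p
  have hc : 0 < sound2 γ (ρL, 0, p / (γ - 1)) :=
    sound2_pos (by linarith) hρL (hpL.symm ▸ hp)
  rw [Fhllc2_of_qvel_eq_zero (qvel_of_momentum_eq_zero _ _ n) (qvel_of_momentum_eq_zero _ _ n)
    (hpL.trans hpR.symm) hc, hpL]

/-- Lemma 4.1: contact property of the 2D HLLC flux. -/
theorem hllc2_contact (γ : ℝ) (hγ : 1 < γ) (ρL ρR p : ℝ)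
    (hρL : 0 < ρL) (hρR : 0 < ρR) (hp : 0 < p)
    (n : EuclideanSpace ℝ (Fin 2)) (hn : ‖n‖ = 1) :
    Fhllc2 γ (ρL, 0, p / (γ - 1)) (ρR, 0, p / (γ - 1)) n
      = ((0 : ℝ), p • n, (0 : ℝ)) :=
  hllc2_contact_general γ hγ ρL ρR p hρL hp n
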